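/- arXiv:1201.6503 — 2 statements merged into one kernel-verified Lean document; each statement's English description precedes it below -/
import Mathlib

section
/- Let g be C¹ near 0 with g(0)=0, g'(0)=λ²>0, G its potential, and X defined by X²=2G, xX(x)>0 for x≠0. Suppose f is continuous on [0,η] and the Chouikha equation d/dx[G(x)/g(x)²]=f(G(x)) holds for |x|≤δ (x with g(x)≠0). Then for |x| small, (X(x)/g(x))' = f(X(x)²/2)·X'(x). -/
/-!
Near `0` the functions `x g(x)` and `x X(x)` are positive for `x ≠ 0` (since `g'(0) > 0`), so `g`
and `X` do not vanish there. Differentiating `X² = 2G` gives `X' = g / X`, and expanding both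
quotient rules, `(X / g)' = 1 / X - X g' / g²` while `(G / g²)' = 1 / g - X² g' / g³`; the second
times `X' = g / X` is the first, and `G = X² / 2`.
-/

open Set Filter Topology

lemma eventually_mul_pos_of_hasDerivAt_zero {g : ℝ → ℝ} {c : ℝ} (hg : HasDerivAt g c 0)
    (hg0 : g 0 = 0) (hc : 0 < c) : ∀ᶠ x in 𝓝 0, x ≠ 0 → 0 < x * g x := by
  have hslope : ∀ᶠ x in 𝓝[≠] 0, 0 < slope g 0 x :=
    (hasDerivAt_iff_tendsto_slope.mp hg).eventually (lt_mem_nhds hc)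
  filter_upwards [eventually_nhdsWithin_iff.mp hslope] with x hx hx0
  have hpos : 0 < g x / x := by simpa [slope_def_field, hg0] using hx hx0
  simpa [div_pos_iff, mul_pos_iff, and_comm] using hpos

/-- The slope of `X` at `x` is that of `X ^ 2` divided by `X y + X x → 2 X x`. -/
lemma hasDerivAt_of_hasDerivAt_sq {X : ℝ → ℝ} {x d : ℝ} (hc : ContinuousAt X x) (hx : X x ≠ 0)
    (h : HasDerivAt (fun y => X y ^ 2) d x) : HasDerivAt X (d / (2 * X x)) x := by
  rw [hasDerivAt_iff_tendsto_slope] at h ⊢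
  have hsum : Tendsto (fun y => X y + X x) (𝓝[≠] x) (𝓝 (2 * X x)) := by
    rw [two_mul]
    exact (hc.tendsto.add tendsto_const_nhds).mono_left nhdsWithin_le_nhds
  have h2X : 2 * X x ≠ 0 := mul_ne_zero two_ne_zero hx
  refine (h.div hsum h2X).congr' ?_
  filter_upwards [hsum.eventually_ne h2X] with y hy
  simp only [slope_def_field, Pi.div_apply]
  field_simp
  ring

lemma hasDerivAt_integral_of_continuousOn {g : ℝ → ℝ} {s : Set ℝ} {a x : ℝ}
    (hg : ContinuousOn g s) (hs : IsOpen s) (hax : uIcc a x ⊆ s) :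
    HasDerivAt (fun y => ∫ u in a..y, g u) (g x) x :=
  have hx : x ∈ s := hax right_mem_uIcc
  intervalIntegral.integral_hasDerivAt_right ((hg.mono hax).intervalIntegrable)
    (hg.stronglyMeasurableAtFilter hs x hx) (hg.continuousAt (hs.mem_nhds hx))

lemma hasDerivAt_div_of_chouikha {g G X : ℝ → ℝ} {x g' c : ℝ} (hG : HasDerivAt G (g x) x)
    (hg : HasDerivAt g g' x) (hX : HasDerivAt X (g x / X x) x) (hXG : X x ^ 2 = 2 * G x)
    (hgx : g x ≠ 0) (hXx : X x ≠ 0) (hch : HasDerivAt (fun y => G y / g y ^ 2) c x) :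
    HasDerivAt (fun y => X y / g y) (c * (g x / X x)) x := by
  have hc : c = (g x * g x ^ 2 - G x * (2 * g x ^ 1 * g')) / (g x ^ 2) ^ 2 :=
    hch.unique (hG.div (hg.pow 2) (pow_ne_zero 2 hgx))
  refine (hX.div hg hgx).congr_deriv ?_
  rw [hc, show G x = X x ^ 2 / 2 by linarith]
  field_simp

theorem stmt_2_general (ε lam δ : ℝ) (hε : 0 < ε) (hlam : 0 < lam) (hδ : 0 < δ)
    (g G X f : ℝ → ℝ)
    (hg : ContDiffOn ℝ 1 g (Ioo (-ε) ε))
    (hg0 : g 0 = 0) (hg'0 : deriv g 0 = lam ^ 2)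
    (hG : ∀ x, G x = ∫ u in (0:ℝ)..x, g u)
    (hXcont : ∀ᶠ x in nhds (0:ℝ), ContinuousAt X x)
    (hX2 : ∀ᶠ x in nhds (0:ℝ), (X x) ^ 2 = 2 * G x)
    (hXsgn : ∀ᶠ x in nhds (0:ℝ), x ≠ 0 → 0 < x * X x)
    (hChouikha : ∀ x, |x| ≤ δ → g x ≠ 0 →
      HasDerivAt (fun y => G y / (g y) ^ 2) (f (G x)) x) :
    ∃ δ' > 0, ∀ x, |x| < δ' → x ≠ 0 →
      deriv (fun y => X y / g y) x = f ((X x) ^ 2 / 2) * deriv X x := by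
  have hg0' : HasDerivAt g (lam ^ 2) 0 :=
    hg'0 ▸ (differentiableAt_of_deriv_ne_zero (by rw [hg'0]; positivity)).hasDerivAt
  have hIoo : ∀ᶠ x in 𝓝 (0 : ℝ), x ∈ Ioo (-ε) ε := Ioo_mem_nhds (by linarith) hε
  have hIcc : ∀ᶠ x in 𝓝 (0 : ℝ), x ∈ Icc (-δ) δ := Icc_mem_nhds (by linarith) hδ
  obtain ⟨δ', hδ', hnear⟩ := Metric.eventually_nhds_iff.mp <|
    hIoo.and <| hIcc.and <| hXcont.and <| hX2.eventually_nhds.and <| hXsgn.and <|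
    eventually_mul_pos_of_hasDerivAt_zero hg0' hg0 (by positivity)
  refine ⟨δ', hδ', fun x hx hx0 => ?_⟩
  obtain ⟨hxε, hxδ, hXc, hX2x, hXx, hgx⟩ := hnear (by simpa [Real.dist_eq] using hx)
  replace hXx : X x ≠ 0 := right_ne_zero_of_mul (hXx hx0).ne'
  replace hgx : g x ≠ 0 := right_ne_zero_of_mul (hgx hx0).ne'
  have hGd : HasDerivAt G (g x) x := funext hG ▸ hasDerivAt_integral_of_continuousOn
    hg.continuousOn isOpen_Ioo (ordConnected_Ioo.uIcc_subset hIoo.self_of_nhds hxε)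
  have hgd : HasDerivAt g (deriv g x) x :=
    ((hg.contDiffAt (isOpen_Ioo.mem_nhds hxε)).differentiableAt one_ne_zero).hasDerivAt
  have hXd : HasDerivAt X (g x / X x) x := by
    have := hasDerivAt_of_hasDerivAt_sq hXc hXx ((hGd.const_mul 2).congr_of_eventuallyEq hX2x)
    rwa [mul_div_mul_left _ _ two_ne_zero] at this
  rw [(hasDerivAt_div_of_chouikha hGd hgd hXd hX2x.self_of_nhds hgx hXx
    (hChouikha x (abs_le.mpr hxδ) hgx)).deriv, hXd.deriv, hX2x.self_of_nhds,
    mul_div_cancel_left₀ _ two_ne_zero]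

theorem stmt_2 (ε lam η δ : ℝ) (hε : 0 < ε) (hlam : 0 < lam) (hη : 0 < η) (hδ : 0 < δ)
    (g G X f : ℝ → ℝ)
    (hg : ContDiffOn ℝ 1 g (Ioo (-ε) ε))
    (hg0 : g 0 = 0) (hg'0 : deriv g 0 = lam ^ 2)
    (hG : ∀ x, G x = ∫ u in (0:ℝ)..x, g u)
    (hXcont : ∀ᶠ x in nhds (0:ℝ), ContinuousAt X x)
    (hX2 : ∀ᶠ x in nhds (0:ℝ), (X x) ^ 2 = 2 * G x)
    (hXsgn : ∀ᶠ x in nhds (0:ℝ), x ≠ 0 → 0 < x * X x)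
    (hf : ContinuousOn f (Icc 0 η))
    (hChouikha : ∀ x, |x| ≤ δ → g x ≠ 0 →
      HasDerivAt (fun y => G y / (g y) ^ 2) (f (G x)) x) :
    ∃ δ' > 0, ∀ x, |x| < δ' → x ≠ 0 →
      deriv (fun y => X y / g y) x = f ((X x) ^ 2 / 2) * deriv X x :=
  stmt_2_general ε lam δ hε hlam hδ g G X f hg hg0 hg'0 hG hXcont hX2 hXsgn hChouikha
end

section
/- Let g be C¹ near 0 with g(0)=0, g'(0)=λ²>0, G its potential, X defined by X²=2G, xX>0 for x≠0, and f continuous on [0,η]. If (X(x)/g(x))' = f(X(x)²/2)X'(x) for |x| small, then for |x| small X(x)/g(x) = 1/λ + ∫₀^{X(x)} f(q²/2) dq. -/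
open Set Filter Topology intervalIntegral

/-!
Put `F x = X x / g x - ∫ q in 0..X x, f (q ^ 2 / 2)`. The hypothesis on `(X / g)'` and the chain
rule make `F' = 0` on both sides of `0`, so `F` is constant there, and its value is its limit at
`0`. L'Hôpital's rule gives `2 G x / x ^ 2 → lam ^ 2`, so `X x / x → lam` by the sign condition,
while `g x / x → lam ^ 2`; hence `X / g → 1 / lam`, and `X = (X / g) g → 0` kills the integral.
To have a primitive of `q ↦ f (q ^ 2 / 2)` on all of `ℝ`, `f` is first extended continuously
from `[0, η]` by `projIcc`.
-/

theorem IsOpen.eq_of_hasDerivAt_zero_of_tendsto {𝕜 E : Type*} [RCLike 𝕜] [NormedAddCommGroup E]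
    [NormedSpace 𝕜 E] {F : 𝕜 → E} {s : Set 𝕜} {a : 𝕜} {L : E} (hs : IsOpen s)
    (hs' : IsPreconnected s) (ha : a ∈ closure s) (hF : ∀ x ∈ s, HasDerivAt F 0 x)
    (hlim : Tendsto F (𝓝[s] a) (𝓝 L)) {x : 𝕜} (hx : x ∈ s) : F x = L := by
  have hconst : ∀ y ∈ s, F y = F x := fun y hy =>
    hs.is_const_of_deriv_eq_zero hs' (fun z hz => (hF z hz).differentiableAt.differentiableWithinAt)
      (fun z hz => (hF z hz).deriv) hy hx
  have : (𝓝[s] a).NeBot := mem_closure_iff_nhdsWithin_neBot.mp ha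
  exact tendsto_nhds_unique
    (tendsto_const_nhds.congr' (eventually_nhdsWithin_of_forall fun y hy => (hconst y hy).symm))
    hlim

theorem eventually_eq_of_hasDerivAt_zero_of_tendsto_nhdsNE {E : Type*} [NormedAddCommGroup E]
    [NormedSpace ℝ E] {F : ℝ → E} {a : ℝ} {L : E} (hF : ∀ᶠ x in 𝓝[≠] a, HasDerivAt F 0 x)
    (hlim : Tendsto F (𝓝[≠] a) (𝓝 L)) : ∀ᶠ x in 𝓝[≠] a, F x = L := by
  obtain ⟨δ, hδ, hball⟩ := Metric.mem_nhdsWithin_iff.mp hF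
  have hF' : ∀ y, a - δ < y → y < a + δ → y ≠ a → HasDerivAt F 0 y := fun y h₁ h₂ hy =>
    hball ⟨by rw [Metric.mem_ball, Real.dist_eq, abs_lt]; constructor <;> linarith, hy⟩
  refine Metric.mem_nhdsWithin_iff.mpr ⟨δ, hδ, fun x ⟨hx, hxa⟩ => ?_⟩
  rw [Metric.mem_ball, Real.dist_eq, abs_lt] at hx
  rcases (show x ≠ a from hxa).lt_or_gt with hlt | hgt
  · refine isOpen_Ioo.eq_of_hasDerivAt_zero_of_tendsto isPreconnected_Ioo ?_
      (fun y hy => hF' y hy.1 (by linarith [hy.2]) hy.2.ne)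
      (hlim.mono_left (nhdsWithin_mono _ fun y hy => hy.2.ne)) ⟨by linarith, hlt⟩
    rw [closure_Ioo (by linarith)]
    exact right_mem_Icc.2 (by linarith)
  · refine isOpen_Ioo.eq_of_hasDerivAt_zero_of_tendsto isPreconnected_Ioo ?_
      (fun y hy => hF' y (by linarith [hy.1]) hy.2 hy.1.ne')
      (hlim.mono_left (nhdsWithin_mono _ fun y hy => hy.1.ne')) ⟨hgt, by linarith⟩
    rw [closure_Ioo (by linarith)]
    exact left_mem_Icc.2 (by linarith)

theorem DifferentiableAt.of_div {𝕜 : Type*} [NontriviallyNormedField 𝕜] {u v : 𝕜 → 𝕜} {x : 𝕜}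
    (huv : DifferentiableAt 𝕜 (fun y => u y / v y) x) (hv : DifferentiableAt 𝕜 v x)
    (hvx : v x ≠ 0) : DifferentiableAt 𝕜 u x :=
  (huv.mul hv).congr_of_eventuallyEq
    ((hv.continuousAt.eventually_ne hvx).mono fun y hy => (div_mul_cancel₀ (u y) hy).symm)

theorem hasDerivAt_div_sub_integral_comp {X g φ : ℝ → ℝ} {x : ℝ} (hφ : Continuous φ)
    (hXg : HasDerivAt (fun y => X y / g y) (φ (X x) * deriv X x) x)
    (hg : DifferentiableAt ℝ g x) (hgx : g x ≠ 0) :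
    HasDerivAt (fun y => X y / g y - ∫ q in (0:ℝ)..X y, φ q) 0 x := by
  have hX : HasDerivAt X (deriv X x) x := (hXg.differentiableAt.of_div hg hgx).hasDerivAt
  exact (hXg.sub ((hφ.integral_hasStrictDerivAt 0 (X x)).hasDerivAt.comp x hX)).congr_deriv
    (sub_self _)

theorem Filter.Tendsto.eventually_ne_zero_of_div {α 𝕜 : Type*} [NormedField 𝕜] {l : Filter α}
    {u v : α → 𝕜} {c : 𝕜} (h : Tendsto (fun x => u x / v x) l (𝓝 c)) (hc : c ≠ 0) :
    ∀ᶠ x in l, v x ≠ 0 :=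
  -- `u x / 0 = 0`
  (h.eventually_ne hc).mono fun x hx hv => hx (by simp [hv])

theorem Filter.Tendsto.tendsto_zero_of_div {α 𝕜 : Type*} [NormedField 𝕜] {l : Filter α}
    {u v : α → 𝕜} {c : 𝕜} (h : Tendsto (fun x => u x / v x) l (𝓝 c)) (hc : c ≠ 0)
    (hv : Tendsto v l (𝓝 0)) : Tendsto u l (𝓝 0) := by
  simpa using (h.mul hv).congr'
    ((h.eventually_ne_zero_of_div hc).mono fun x hx => div_mul_cancel₀ (u x) hx)

theorem ContinuousOn.continuous_comp_projIcc {α β : Type*} [LinearOrder α] [TopologicalSpace α]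
    [OrderTopology α] [TopologicalSpace β] {f : α → β} {a b : α} (h : a ≤ b)
    (hf : ContinuousOn f (Icc a b)) : Continuous fun x => f (projIcc a b h x) :=
  hf.comp_continuous (continuous_subtype_val.comp continuous_projIcc) fun _ => Subtype.mem _

theorem eqOn_comp_projIcc_sq_div_two {β : Type*} {f : ℝ → β} {η b : ℝ} (hη : 0 ≤ η)
    (hb : b ^ 2 / 2 ≤ η) :
    EqOn (fun q => f (projIcc 0 η hη (q ^ 2 / 2))) (fun q => f (q ^ 2 / 2)) (uIcc 0 b) := by
  intro q hq
  have hqb : q ^ 2 ≤ b ^ 2 := sq_le_sq.mpr (by simpa using abs_sub_left_of_mem_uIcc hq)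
  simp only [projIcc_of_mem _ (⟨by positivity, by linarith⟩ : q ^ 2 / 2 ∈ Icc 0 η)]

theorem eventually_hasDerivAt_integral_of_continuousOn {E : Type*} [NormedAddCommGroup E]
    [NormedSpace ℝ E] [CompleteSpace E] {g : ℝ → E} {s : Set ℝ} {a : ℝ} (hs : s ∈ 𝓝 a)
    (hg : ContinuousOn g s) : ∀ᶠ x in 𝓝 a, HasDerivAt (fun x => ∫ u in a..x, g u) (g x) x := by
  obtain ⟨r, hr, hball⟩ := Metric.mem_nhds_iff.mp hs
  have hgr := hg.mono hball
  filter_upwards [Metric.ball_mem_nhds a hr] with x hx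
  exact integral_hasDerivAt_right
    (hgr.mono ((convex_ball a r).ordConnected.uIcc_subset (Metric.mem_ball_self hr) hx)
      |>.intervalIntegrable)
    (hgr.stronglyMeasurableAtFilter Metric.isOpen_ball x hx)
    (hgr.continuousAt (Metric.isOpen_ball.mem_nhds hx))

theorem HasDerivAt.tendsto_div_self {g : ℝ → ℝ} {c : ℝ} (hg : HasDerivAt g c 0) (hg0 : g 0 = 0) :
    Tendsto (fun x => g x / x) (𝓝[≠] 0) (𝓝 c) := by
  simpa [slope_fun_def_field, hg0] using hasDerivAt_iff_tendsto_slope.mp hg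

theorem tendsto_two_mul_div_sq_of_hasDerivAt {g G : ℝ → ℝ} {c : ℝ}
    (hG : ∀ᶠ x in 𝓝 0, HasDerivAt G (g x) x) (hG0 : G 0 = 0) (hg : HasDerivAt g c 0)
    (hg0 : g 0 = 0) : Tendsto (fun x => 2 * G x / x ^ 2) (𝓝[≠] 0) (𝓝 c) := by
  refine HasDerivAt.lhopital_zero_nhdsNE (f' := fun x => 2 * g x) (g' := fun x => 2 * x)
    ((eventually_nhdsWithin_of_eventually_nhds hG).mono fun x hx => hx.const_mul 2)
    (Eventually.of_forall fun x => by simpa using hasDerivAt_pow 2 x)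
    (eventually_nhdsWithin_of_forall fun x hx => mul_ne_zero two_ne_zero hx) ?_ ?_ ?_
  · simpa [hG0] using (hG.self_of_nhds.continuousAt.tendsto.const_mul 2).mono_left
      nhdsWithin_le_nhds
  · simpa using ((continuous_pow 2).tendsto (0 : ℝ)).mono_left nhdsWithin_le_nhds
  · simpa only [mul_div_mul_left _ _ (two_ne_zero' ℝ)] using hg.tendsto_div_self hg0

theorem tendsto_div_self_of_sq_eq {X H : ℝ → ℝ} {c : ℝ} (hc : 0 ≤ c)
    (hsq : ∀ᶠ x in 𝓝[≠] 0, X x ^ 2 = H x) (hsgn : ∀ᶠ x in 𝓝[≠] 0, 0 < x * X x)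
    (hH : Tendsto (fun x => H x / x ^ 2) (𝓝[≠] 0) (𝓝 (c ^ 2))) :
    Tendsto (fun x => X x / x) (𝓝[≠] 0) (𝓝 c) := by
  have hsqrt := (Real.continuous_sqrt.tendsto _).comp hH
  rw [Real.sqrt_sq hc] at hsqrt
  refine hsqrt.congr' ?_
  filter_upwards [hsq, hsgn] with x hX hx
  have hx0 : x ≠ 0 := left_ne_zero_of_mul hx.ne'
  have hpos : 0 < X x / x := by
    rw [show X x / x = x * X x / x ^ 2 by field_simp]
    positivity
  rw [Function.comp_apply, ← hX, ← div_pow, Real.sqrt_sq hpos.le]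

theorem tendsto_div_of_sq_eq_two_mul_of_hasDerivAt {g G X : ℝ → ℝ} {lam : ℝ} (hlam : 0 < lam)
    (hg : HasDerivAt g (lam ^ 2) 0) (hg0 : g 0 = 0) (hG : ∀ᶠ x in 𝓝 0, HasDerivAt G (g x) x)
    (hG0 : G 0 = 0) (hX2 : ∀ᶠ x in 𝓝 0, X x ^ 2 = 2 * G x)
    (hXsgn : ∀ᶠ x in 𝓝[≠] 0, 0 < x * X x) :
    Tendsto (fun x => X x / g x) (𝓝[≠] 0) (𝓝 (1 / lam)) := by
  have hX : Tendsto (fun x => X x / x) (𝓝[≠] 0) (𝓝 lam) :=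
    tendsto_div_self_of_sq_eq hlam.le (eventually_nhdsWithin_of_eventually_nhds hX2) hXsgn
      (tendsto_two_mul_div_sq_of_hasDerivAt hG hG0 hg hg0)
  have hdiv := hX.div (hg.tendsto_div_self hg0) (by positivity)
  rw [show lam / lam ^ 2 = 1 / lam by field_simp] at hdiv
  refine hdiv.congr' (eventually_nhdsWithin_of_forall fun x hx => ?_)
  exact div_div_div_cancel_right₀ (hx : x ≠ 0) (X x) (g x)

theorem stmt_3_general (ε lam η : ℝ) (hε : 0 < ε) (hlam : 0 < lam) (hη : 0 < η)
    (g G X f : ℝ → ℝ)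
    (hg : ContDiffOn ℝ 1 g (Ioo (-ε) ε))
    (hg0 : g 0 = 0) (hg'0 : deriv g 0 = lam ^ 2)
    (hG : ∀ x, G x = ∫ u in (0:ℝ)..x, g u)
    (hX2 : ∀ᶠ x in nhds (0:ℝ), (X x) ^ 2 = 2 * G x)
    (hXsgn : ∀ᶠ x in nhds (0:ℝ), x ≠ 0 → 0 < x * X x)
    (hf : ContinuousOn f (Icc 0 η))
    (hEq : ∀ᶠ x in nhds (0:ℝ), x ≠ 0 →
      HasDerivAt (fun y => X y / g y) (f ((X x) ^ 2 / 2) * deriv X x) x) :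
    ∃ δ > 0, ∀ x, |x| < δ → x ≠ 0 →
      X x / g x = 1 / lam + ∫ q in (0:ℝ)..(X x), f (q ^ 2 / 2) := by
  have hgd : ∀ᶠ x in 𝓝 0, DifferentiableAt ℝ g x :=
    (isOpen_Ioo.eventually_mem (show (0:ℝ) ∈ Ioo (-ε) ε from ⟨by linarith, hε⟩)).mono fun x hx =>
      (hg.differentiableOn one_ne_zero x hx).differentiableAt (isOpen_Ioo.mem_nhds hx)
  have hGd : ∀ᶠ x in 𝓝 0, HasDerivAt G (g x) x := by
    simpa only [← funext hG] using eventually_hasDerivAt_integral_of_continuousOn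
      (Ioo_mem_nhds (by linarith) hε) hg.continuousOn
  have hXg : Tendsto (fun x => X x / g x) (𝓝[≠] 0) (𝓝 (1 / lam)) :=
    tendsto_div_of_sq_eq_two_mul_of_hasDerivAt hlam (hg'0 ▸ hgd.self_of_nhds.hasDerivAt) hg0 hGd
      (by simp [hG]) hX2 (eventually_nhdsWithin_iff.mpr hXsgn)
  have hX0 : Tendsto X (𝓝[≠] 0) (𝓝 0) := hXg.tendsto_zero_of_div (one_div_pos.2 hlam).ne'
    ((hg0 ▸ hgd.self_of_nhds.continuousAt.tendsto).mono_left nhdsWithin_le_nhds)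
  have hXη : ∀ᶠ x in 𝓝[≠] 0, X x ^ 2 / 2 < η :=
    ((hX0.pow 2).div_const 2).eventually (eventually_lt_nhds (by simpa using hη))
  set φ : ℝ → ℝ := fun q => f (projIcc 0 η hη.le (q ^ 2 / 2))
  have hφ : Continuous φ := (hf.continuous_comp_projIcc hη.le).comp (by fun_prop)
  have hFlim : Tendsto (fun x => X x / g x - ∫ q in (0:ℝ)..X x, φ q) (𝓝[≠] 0) (𝓝 (1 / lam)) := by
    simpa using
      hXg.sub ((hφ.integral_hasStrictDerivAt 0 0).hasDerivAt.continuousAt.tendsto.comp hX0)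
  have hF : ∀ᶠ x in 𝓝[≠] 0, X x / g x - ∫ q in (0:ℝ)..X x, φ q = 1 / lam := by
    refine eventually_eq_of_hasDerivAt_zero_of_tendsto_nhdsNE ?_ hFlim
    filter_upwards [eventually_nhdsWithin_of_eventually_nhds hgd,
      hXg.eventually_ne_zero_of_div (one_div_pos.2 hlam).ne', eventually_nhdsWithin_iff.mpr hEq,
      hXη] with x hgdx hgx hEqx hXx
    exact hasDerivAt_div_sub_integral_comp hφ (by
      rwa [show φ (X x) = f (X x ^ 2 / 2) from
        eqOn_comp_projIcc_sq_div_two hη.le hXx.le right_mem_uIcc]) hgdx hgx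
  obtain ⟨δ, hδ, hball⟩ := Metric.mem_nhdsWithin_iff.mp (hF.and hXη)
  refine ⟨δ, hδ, fun x hx hx0 => ?_⟩
  obtain ⟨hFx, hXx⟩ := hball ⟨(Real.dist_0_eq_abs x).trans_lt hx, hx0⟩
  rw [← integral_congr (eqOn_comp_projIcc_sq_div_two hη.le hXx.le)]
  linarith

theorem stmt_3 (ε lam η : ℝ) (hε : 0 < ε) (hlam : 0 < lam) (hη : 0 < η)
    (g G X f : ℝ → ℝ)
    (hg : ContDiffOn ℝ 1 g (Ioo (-ε) ε))
    (hg0 : g 0 = 0) (hg'0 : deriv g 0 = lam ^ 2)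
    (hG : ∀ x, G x = ∫ u in (0:ℝ)..x, g u)
    (hXcont : ∀ᶠ x in nhds (0:ℝ), ContinuousAt X x)
    (hX2 : ∀ᶠ x in nhds (0:ℝ), (X x) ^ 2 = 2 * G x)
    (hXsgn : ∀ᶠ x in nhds (0:ℝ), x ≠ 0 → 0 < x * X x)
    (hf : ContinuousOn f (Icc 0 η))
    (hEq : ∀ᶠ x in nhds (0:ℝ), x ≠ 0 →
      HasDerivAt (fun y => X y / g y) (f ((X x) ^ 2 / 2) * deriv X x) x) :
    ∃ δ > 0, ∀ x, |x| < δ → x ≠ 0 →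
      X x / g x = 1 / lam + ∫ q in (0:ℝ)..(X x), f (q ^ 2 / 2) :=
  stmt_3_general ε lam η hε hlam hη g G X f hg hg0 hg'0 hG hX2 hXsgn hf hEq
end
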